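/- arXiv:2504.15753 — 5 statements merged into one kernel-verified Lean document; each statement's English description precedes it below -/
import Mathlib

section
/- Let t0 < t1 and ω > 0 be real numbers, T := t1 − t0, and x, y ∈ ℝ. The infimum of ∫_{t0}^{t1} ( (1/4) z'(τ)² + (1/4) ω² z(τ)² ) dτ over all continuously differentiable functions z : [t0,t1] → ℝ with z(t0) = x and z(t1) = y equals ( ω(x² + y²) cosh(ωT) − 2ω x y ) / ( 4 sinh(ωT) ). -/
open MeasureTheory Real

/-!
Fix a solution `Z` of the Euler–Lagrange equation `Z'' = c Z` of the action `∫ (z'² + c z²)`.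
Since `d/dt ((2z - Z) Z') = z'² + c z² - ((z' - Z')² + c (z - Z)²)`, the action of any `z`
is a boundary term plus the nonnegative action of `z - Z`; for `z` with the endpoint values of
`Z` the boundary term is `Z Z' |ₐᵇ`, so `Z` is a minimiser. For `c = ω²` the solution with
`Z t₀ = x`, `Z t₁ = y` is the `sinh` interpolant, whose boundary term gives the stated value.
-/

section QuadraticAction

open intervalIntegral

variable {c a b : ℝ} {Z Z' z z' : ℝ → ℝ}

theorem integral_sq_add_mul_sq_eq_boundary_add (hZ : ∀ t, HasDerivAt Z (Z' t) t)
    (hZ' : ∀ t, HasDerivAt Z' (c * Z t) t) (hz : ∀ t, HasDerivAt z (z' t) t)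
    (hz' : Continuous z') :
    ∫ t in a..b, (z' t ^ 2 + c * z t ^ 2) =
      ((2 * z b - Z b) * Z' b - (2 * z a - Z a) * Z' a) +
        ∫ t in a..b, ((z' t - Z' t) ^ 2 + c * (z t - Z t) ^ 2) := by
  have hZc : Continuous Z := continuous_iff_continuousAt.2 fun t => (hZ t).continuousAt
  have hZ'c : Continuous Z' := continuous_iff_continuousAt.2 fun t => (hZ' t).continuousAt
  have hzc : Continuous z := continuous_iff_continuousAt.2 fun t => (hz t).continuousAt
  have hF : ∀ t ∈ Set.uIcc a b, HasDerivAt (fun t => (2 * z t - Z t) * Z' t)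
      ((z' t ^ 2 + c * z t ^ 2) - ((z' t - Z' t) ^ 2 + c * (z t - Z t) ^ 2)) t := fun t _ =>
    ((((hz t).const_mul 2).sub (hZ t)).mul (hZ' t)).congr_deriv (by simp only [Pi.sub_apply]; ring)
  rw [← integral_eq_sub_of_hasDerivAt hF ((by fun_prop : Continuous _).intervalIntegrable _ _),
    ← integral_add ((by fun_prop : Continuous _).intervalIntegrable _ _)
      ((by fun_prop : Continuous _).intervalIntegrable _ _)]
  simp only [sub_add_cancel]

theorem integral_sq_add_mul_sq_eq_of_hasDerivAt (hZ : ∀ t, HasDerivAt Z (Z' t) t)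
    (hZ' : ∀ t, HasDerivAt Z' (c * Z t) t) :
    ∫ t in a..b, (Z' t ^ 2 + c * Z t ^ 2) = Z b * Z' b - Z a * Z' a := by
  have hZ'c : Continuous Z' := continuous_iff_continuousAt.2 fun t => (hZ' t).continuousAt
  rw [integral_sq_add_mul_sq_eq_boundary_add hZ hZ' hZ hZ'c]
  simp only [sub_self, zero_pow two_ne_zero, mul_zero, add_zero, intervalIntegral.integral_zero]
  ring

theorem integral_sq_add_mul_sq_le (hc : 0 ≤ c) (hab : a ≤ b) (hZ : ∀ t, HasDerivAt Z (Z' t) t)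
    (hZ' : ∀ t, HasDerivAt Z' (c * Z t) t) (hz : ∀ t, HasDerivAt z (z' t) t)
    (hz' : Continuous z') (hza : z a = Z a) (hzb : z b = Z b) :
    ∫ t in a..b, (Z' t ^ 2 + c * Z t ^ 2) ≤ ∫ t in a..b, (z' t ^ 2 + c * z t ^ 2) := by
  rw [integral_sq_add_mul_sq_eq_of_hasDerivAt hZ hZ',
    integral_sq_add_mul_sq_eq_boundary_add hZ hZ' hz hz', hza, hzb]
  have : 0 ≤ ∫ t in a..b, ((z' t - Z' t) ^ 2 + c * (z t - Z t) ^ 2) :=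
    integral_nonneg hab fun t _ => by positivity
  linarith

end QuadraticAction

section SinhInterpolant

variable (ω t₀ t₁ x y : ℝ)

noncomputable def sinhInterpolant (τ : ℝ) : ℝ :=
  (x * sinh (ω * (t₁ - τ)) + y * sinh (ω * (τ - t₀))) / sinh (ω * (t₁ - t₀))

noncomputable def sinhInterpolantDeriv (τ : ℝ) : ℝ :=
  ω * (y * cosh (ω * (τ - t₀)) - x * cosh (ω * (t₁ - τ))) / sinh (ω * (t₁ - t₀))

theorem hasDerivAt_sinhInterpolant (τ : ℝ) :
    HasDerivAt (sinhInterpolant ω t₀ t₁ x y) (sinhInterpolantDeriv ω t₀ t₁ x y τ) τ := by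
  have h₁ := (((hasDerivAt_id τ).const_sub t₁).const_mul ω).sinh
  have h₂ := (((hasDerivAt_id τ).sub_const t₀).const_mul ω).sinh
  refine (((h₁.const_mul x).add (h₂.const_mul y)).div_const _).congr_deriv ?_
  simp only [sinhInterpolantDeriv, id]
  ring

theorem hasDerivAt_sinhInterpolantDeriv (τ : ℝ) :
    HasDerivAt (sinhInterpolantDeriv ω t₀ t₁ x y)
      (ω ^ 2 * sinhInterpolant ω t₀ t₁ x y τ) τ := by
  have h₁ := (((hasDerivAt_id τ).const_sub t₁).const_mul ω).cosh
  have h₂ := (((hasDerivAt_id τ).sub_const t₀).const_mul ω).cosh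
  refine ((((h₂.const_mul y).sub (h₁.const_mul x)).const_mul ω).div_const _).congr_deriv ?_
  simp only [sinhInterpolant, id]
  ring

variable {ω t₀ t₁}

theorem sinhInterpolant_left (hS : sinh (ω * (t₁ - t₀)) ≠ 0) :
    sinhInterpolant ω t₀ t₁ x y t₀ = x := by
  simp [sinhInterpolant, hS]

theorem sinhInterpolant_right (hS : sinh (ω * (t₁ - t₀)) ≠ 0) :
    sinhInterpolant ω t₀ t₁ x y t₁ = y := by
  simp [sinhInterpolant, hS]

theorem sinhInterpolant_mul_deriv_sub (hS : sinh (ω * (t₁ - t₀)) ≠ 0) :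
    sinhInterpolant ω t₀ t₁ x y t₁ * sinhInterpolantDeriv ω t₀ t₁ x y t₁ -
        sinhInterpolant ω t₀ t₁ x y t₀ * sinhInterpolantDeriv ω t₀ t₁ x y t₀ =
      (ω * (x ^ 2 + y ^ 2) * cosh (ω * (t₁ - t₀)) - 2 * ω * x * y) / sinh (ω * (t₁ - t₀)) := by
  simp only [sinhInterpolant_left x y hS, sinhInterpolant_right x y hS,
    sinhInterpolantDeriv, sub_self, mul_zero, cosh_zero]
  ring

end SinhInterpolant

/-- The infimum of `∫ ((1/4) z'² + (1/4) ω² z²)` over C¹ functions joining `x` to `y`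
on `[t0, t1]` equals `(ω(x² + y²)cosh(ωT) − 2ωxy)/(4 sinh(ωT))`, where `T = t1 - t0`. -/
theorem stmt_1 (t0 t1 ω : ℝ) (h : t0 < t1) (hω : 0 < ω) (x y : ℝ) :
    sInf {E : ℝ | ∃ z : ℝ → ℝ, ContDiff ℝ 1 z ∧ z t0 = x ∧ z t1 = y ∧
        E = ∫ τ in t0..t1, ((1/4) * (deriv z τ)^2 + (1/4) * ω^2 * (z τ)^2)}
      = (ω * (x^2 + y^2) * Real.cosh (ω * (t1 - t0)) - 2 * ω * x * y)
          / (4 * Real.sinh (ω * (t1 - t0))) := by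
  have hS : sinh (ω * (t1 - t0)) ≠ 0 := (sinh_pos_iff.2 (mul_pos hω (sub_pos.2 h))).ne'
  set Z := sinhInterpolant ω t0 t1 x y
  have hZ := hasDerivAt_sinhInterpolant ω t0 t1 x y
  have hZ' := hasDerivAt_sinhInterpolantDeriv ω t0 t1 x y
  have hderiv : deriv Z = sinhInterpolantDeriv ω t0 t1 x y := funext fun τ => (hZ τ).deriv
  have action (z : ℝ → ℝ) : ∫ τ in t0..t1, ((1/4) * (deriv z τ)^2 + (1/4) * ω^2 * (z τ)^2) =
      (1/4) * ∫ τ in t0..t1, (deriv z τ ^ 2 + ω ^ 2 * z τ ^ 2) := by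
    rw [← intervalIntegral.integral_const_mul]
    congr 1 with τ
    ring
  have value : (ω * (x^2 + y^2) * cosh (ω * (t1 - t0)) - 2 * ω * x * y)
      / (4 * sinh (ω * (t1 - t0))) =
        (1/4) * ∫ τ in t0..t1, (deriv Z τ ^ 2 + ω ^ 2 * Z τ ^ 2) := by
    rw [hderiv, integral_sq_add_mul_sq_eq_of_hasDerivAt hZ hZ',
      sinhInterpolant_mul_deriv_sub x y hS]
    ring
  refine IsLeast.csInf_eq ⟨⟨Z, ?_, sinhInterpolant_left x y hS, sinhInterpolant_right x y hS,
    by rw [action, value]⟩, ?_⟩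
  · exact contDiff_one_iff_deriv.2 ⟨fun τ => (hZ τ).differentiableAt,
      hderiv ▸ continuous_iff_continuousAt.2 fun τ => (hZ' τ).continuousAt⟩
  · rintro _ ⟨z, hz, hz0, hz1, rfl⟩
    rw [action, value, hderiv]
    gcongr
    exact integral_sq_add_mul_sq_le (sq_nonneg ω) h.le hZ hZ'
      (fun τ => ((hz.differentiable one_ne_zero) τ).hasDerivAt) (hz.continuous_deriv le_rfl)
      (hz0.trans (sinhInterpolant_left x y hS).symm)
      (hz1.trans (sinhInterpolant_right x y hS).symm)
end

section
/- (Completion-of-squares identity in Proposition 1.) Let t0 < t1, and let A : [t0,t1] → ℝ^{n×n}, B̂ : [t0,t1] → ℝ^{n×m}, Q : [t0,t1] → ℝ^{n×n} be continuous with Q(τ) symmetric for every τ. Let K : [t0,t1] → ℝ^{n×n} be differentiable with K(τ) symmetric for every τ, satisfying the Riccati matrix ODE K'(τ) = −A(τ)ᵀK(τ) − K(τ)A(τ) + K(τ)B̂(τ)B̂(τ)ᵀK(τ) − Q(τ) on [t0,t1] and the terminal condition K(t1) = K1. Let z : [t0,t1] → ℝⁿ be continuously differentiable and u : [t0,t1]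 → ℝᵐ continuous with z'(τ) = A(τ)z(τ) + B̂(τ)u(τ) for all τ, z(t0) = x and z(t1) = y. Define v(τ) := u(τ) + B̂(τ)ᵀK(τ)z(τ). Then ∫_{t0}^{t1} ( (1/2)|u(τ)|² + (1/2) z(τ)ᵀQ(τ)z(τ) ) dτ = ∫_{t0}^{t1} (1/2)|v(τ)|² dτ + (1/2) xᵀK(t0)x − (1/2) yᵀK1 y. -/
/-!
Differentiating `½ zᵀKz` along the trajectory and substituting the dynamics and the Riccati
equation, the symmetry of `K` lets one complete the square pointwise:
`d/dτ (½ zᵀKz) = ½|u + B̂ᵀKz|² − (½|u|² + ½ zᵀQz)`.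
Integrating over `[t0, t1]` with the fundamental theorem of calculus gives the identity.
-/

open MeasureTheory Matrix

attribute [local instance] Matrix.normedAddCommGroup Matrix.normedSpace

section Deriv

variable {𝕜 𝔸 ι κ : Type*} [NontriviallyNormedField 𝕜] [NormedRing 𝔸] [NormedAlgebra 𝕜 𝔸]
  [Fintype ι] {s : Set 𝕜} {τ : 𝕜}

theorem HasDerivWithinAt.dotProduct {a b : 𝕜 → ι → 𝔸} {a' b' : ι → 𝔸}
    (ha : HasDerivWithinAt a a' s τ) (hb : HasDerivWithinAt b b' s τ) :
    HasDerivWithinAt (fun t => a t ⬝ᵥ b t) (a' ⬝ᵥ b τ + a τ ⬝ᵥ b') s τ := by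
  simp only [_root_.dotProduct, ← Finset.sum_add_distrib]
  exact HasDerivWithinAt.fun_sum fun i _ =>
    (hasDerivWithinAt_pi.1 ha i).mul (hasDerivWithinAt_pi.1 hb i)

theorem HasDerivWithinAt.matrix_mulVec {M : 𝕜 → Matrix κ ι 𝔸} {M' : Matrix κ ι 𝔸}
    {w : 𝕜 → ι → 𝔸} {w' : ι → 𝔸} (hM : HasDerivWithinAt M M' s τ)
    (hw : HasDerivWithinAt w w' s τ) :
    HasDerivWithinAt (fun t => M t *ᵥ w t) (M' *ᵥ w τ + M τ *ᵥ w') s τ :=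
  hasDerivWithinAt_pi.2 fun k => (hasDerivWithinAt_pi.1 hM k).dotProduct hw

end Deriv

theorem dotProduct_mulVec_eq_transpose_mulVec_dotProduct {R ι κ : Type*} [CommSemiring R]
    [Fintype ι] [Fintype κ] (v : ι → R) (M : Matrix ι κ R) (w : κ → R) :
    v ⬝ᵥ M *ᵥ w = (Mᵀ *ᵥ v) ⬝ᵥ w := by
  rw [dotProduct_mulVec, ← vecMul_transpose, transpose_transpose]

theorem riccati_completion_of_squares {R ι κ : Type*} [CommRing R] [Fintype ι] [Fintype κ]
    (K A Q : Matrix ι ι R) (B : Matrix ι κ R) (z : ι → R) (u : κ → R) (hK : K.IsSymm) :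
    (A *ᵥ z + B *ᵥ u) ⬝ᵥ K *ᵥ z
      + z ⬝ᵥ ((-Aᵀ * K - K * A + K * B * Bᵀ * K - Q) *ᵥ z + K *ᵥ (A *ᵥ z + B *ᵥ u))
    = (u + Bᵀ *ᵥ (K *ᵥ z)) ⬝ᵥ (u + Bᵀ *ᵥ (K *ᵥ z)) - (u ⬝ᵥ u + z ⬝ᵥ Q *ᵥ z) := by
  simp only [mulVec_add, add_mulVec, sub_mulVec, neg_mulVec, ← mulVec_mulVec, dotProduct_add,
    add_dotProduct, dotProduct_neg, dotProduct_sub]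
  simp only [dotProduct_mulVec_eq_transpose_mulVec_dotProduct, hK.eq, transpose_transpose]
  ring

theorem integral_eq_sub_of_hasDerivWithinAt_Icc {E : Type*} [NormedAddCommGroup E]
    [NormedSpace ℝ E] [CompleteSpace E] {f f' : ℝ → E} {a b : ℝ} (hab : a ≤ b)
    (hf : ∀ x ∈ Set.Icc a b, HasDerivWithinAt f (f' x) (Set.Icc a b) x)
    (hf' : IntervalIntegrable f' volume a b) :
    ∫ x in a..b, f' x = f b - f a :=
  intervalIntegral.integral_eq_sub_of_hasDeriv_right_of_le hab
    (fun x hx => (hf x hx).continuousWithinAt)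
    (fun x hx => ((hf x (Set.Ioo_subset_Icc_self hx)).hasDerivAt
      (Icc_mem_nhds hx.1 hx.2)).hasDerivWithinAt) hf'

theorem stmt_3_general (n m : ℕ) (t0 t1 : ℝ) (h : t0 < t1)
    (A Q : ℝ → Matrix (Fin n) (Fin n) ℝ) (B : ℝ → Matrix (Fin n) (Fin m) ℝ)
    (hB : ContinuousOn B (Set.Icc t0 t1))
    (hQ : ContinuousOn Q (Set.Icc t0 t1))
    (K : ℝ → Matrix (Fin n) (Fin n) ℝ) (K1 : Matrix (Fin n) (Fin n) ℝ)
    (hKsymm : ∀ τ ∈ Set.Icc t0 t1, (K τ).IsSymm)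
    (hK : ∀ τ ∈ Set.Icc t0 t1,
      HasDerivWithinAt K
        (-(A τ)ᵀ * K τ - K τ * A τ + K τ * B τ * (B τ)ᵀ * K τ - Q τ)
        (Set.Icc t0 t1) τ)
    (hK1 : K t1 = K1)
    (x y : Fin n → ℝ) (z : ℝ → Fin n → ℝ) (u : ℝ → Fin m → ℝ)
    (hu : ContinuousOn u (Set.Icc t0 t1))
    (hz : ∀ τ ∈ Set.Icc t0 t1,
      HasDerivWithinAt z (A τ *ᵥ z τ + B τ *ᵥ u τ) (Set.Icc t0 t1) τ)
    (hz0 : z t0 = x) (hz1 : z t1 = y)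
    (v : ℝ → Fin m → ℝ)
    (hv : v = fun τ => u τ + (B τ)ᵀ *ᵥ (K τ *ᵥ z τ)) :
    (∫ τ in t0..t1, ((1/2) * (u τ ⬝ᵥ u τ) + (1/2) * (z τ ⬝ᵥ Q τ *ᵥ z τ)))
      = (∫ τ in t0..t1, (1/2) * (v τ ⬝ᵥ v τ))
        + (1/2) * (x ⬝ᵥ K t0 *ᵥ x) - (1/2) * (y ⬝ᵥ K1 *ᵥ y) := by
  subst hz0 hz1 hK1
  have hzc : ContinuousOn z (Set.Icc t0 t1) := fun τ hτ => (hz τ hτ).continuousWithinAt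
  have hKc : ContinuousOn K (Set.Icc t0 t1) := fun τ hτ => (hK τ hτ).continuousWithinAt
  have hIcc : Set.uIcc t0 t1 = Set.Icc t0 t1 := Set.uIcc_of_le h.le
  have hcost : IntervalIntegrable (fun τ => (1/2) * (u τ ⬝ᵥ u τ) + (1/2) * (z τ ⬝ᵥ Q τ *ᵥ z τ))
      volume t0 t1 :=
    ContinuousOn.intervalIntegrable (by rw [hIcc]; fun_prop)
  have hcost' : IntervalIntegrable (fun τ => (1/2) * (v τ ⬝ᵥ v τ)) volume t0 t1 :=
    ContinuousOn.intervalIntegrable (by rw [hIcc, hv]; fun_prop)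
  have hderiv : ∀ τ ∈ Set.Icc t0 t1, HasDerivWithinAt (fun t => (1/2) * (z t ⬝ᵥ K t *ᵥ z t))
      ((1/2) * (v τ ⬝ᵥ v τ) - ((1/2) * (u τ ⬝ᵥ u τ) + (1/2) * (z τ ⬝ᵥ Q τ *ᵥ z τ)))
      (Set.Icc t0 t1) τ := by
    intro τ hτ
    refine (((hz τ hτ).dotProduct ((hK τ hτ).matrix_mulVec (hz τ hτ))).const_mul
      (1/2 : ℝ)).congr_deriv ?_
    rw [hv, riccati_completion_of_squares _ _ _ _ _ _ (hKsymm τ hτ)]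
    ring
  have hftc := integral_eq_sub_of_hasDerivWithinAt_Icc h.le hderiv (hcost'.sub hcost)
  rw [intervalIntegral.integral_sub hcost' hcost] at hftc
  linarith

/-- Completion-of-squares identity (Proposition 1): along any admissible pair `(z, u)` for
the dynamics `z' = A z + B̂ u` with endpoints `x, y`, and with `K` a symmetric solution of
the Riccati matrix ODE with terminal condition `K(t1) = K1`, the quadratic cost equals
the transformed cost `∫ (1/2)|v|²` plus the boundary terms. -/
theorem stmt_3 (n m : ℕ) (t0 t1 : ℝ) (h : t0 < t1)
    (A Q : ℝ → Matrix (Fin n) (Fin n) ℝ) (B : ℝ → Matrix (Fin n) (Fin m) ℝ)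
    (hA : ContinuousOn A (Set.Icc t0 t1)) (hB : ContinuousOn B (Set.Icc t0 t1))
    (hQ : ContinuousOn Q (Set.Icc t0 t1))
    (hQsymm : ∀ τ ∈ Set.Icc t0 t1, (Q τ).IsSymm)
    (K : ℝ → Matrix (Fin n) (Fin n) ℝ) (K1 : Matrix (Fin n) (Fin n) ℝ)
    (hKsymm : ∀ τ ∈ Set.Icc t0 t1, (K τ).IsSymm)
    (hK : ∀ τ ∈ Set.Icc t0 t1,
      HasDerivWithinAt K
        (-(A τ)ᵀ * K τ - K τ * A τ + K τ * B τ * (B τ)ᵀ * K τ - Q τ)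
        (Set.Icc t0 t1) τ)
    (hK1 : K t1 = K1)
    (x y : Fin n → ℝ) (z : ℝ → Fin n → ℝ) (u : ℝ → Fin m → ℝ)
    (hu : ContinuousOn u (Set.Icc t0 t1))
    (hz : ∀ τ ∈ Set.Icc t0 t1,
      HasDerivWithinAt z (A τ *ᵥ z τ + B τ *ᵥ u τ) (Set.Icc t0 t1) τ)
    (hz0 : z t0 = x) (hz1 : z t1 = y)
    (v : ℝ → Fin m → ℝ)
    (hv : v = fun τ => u τ + (B τ)ᵀ *ᵥ (K τ *ᵥ z τ)) :
    (∫ τ in t0..t1, ((1/2) * (u τ ⬝ᵥ u τ) + (1/2) * (z τ ⬝ᵥ Q τ *ᵥ z τ)))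
      = (∫ τ in t0..t1, (1/2) * (v τ ⬝ᵥ v τ))
        + (1/2) * (x ⬝ᵥ K t0 *ᵥ x) - (1/2) * (y ⬝ᵥ K1 *ᵥ y) :=
  stmt_3_general n m t0 t1 h A Q B hB hQ K K1 hKsymm hK hK1 x y z u hu hz hz0 hz1 v hv
end

section
/- Let Φ, Γ, Π : (t0, t0+δ) → ℝ^{n×n} be such that for every s, Φ(s) is invertible and Γ(s), Π(s) are symmetric positive definite, and suppose Φ(s) → I, Γ(s) → 0 and Π(s) → 0 as s ↓ t0. With blocks M11(s) := Φ(s)ᵀΓ(s)⁻¹Φ(s) + Π(s), M12(s) := −Φ(s)ᵀΓ(s)⁻¹, M22(s) := Γ(s)⁻¹, the Schur complement M22(s) − M12(s)ᵀ M11(s)⁻¹ M12(s) tends to the zero matrix as s ↓ t0. -/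
/-!
With `T := Φ⁻ᵀ Π Φ⁻¹` one has `M11 = Φᵀ (Γ⁻¹ + T) Φ`, so the Schur complement is
`Γ⁻¹ - Γ⁻¹ (Γ⁻¹ + T)⁻¹ Γ⁻¹ = T (1 + Γ T)⁻¹`. The right-hand side no longer involves `Γ⁻¹`,
which blows up as `s ↓ t0`; it is continuous in `(Φ, Γ, Π)` near `(1, 0, 0)`, where it vanishes.
-/

open Matrix Filter Topology

namespace Matrix

variable {n : Type*} [Fintype n] [DecidableEq n]

section Algebra

variable {α : Type*} [CommRing α]

theorem schur_complement_eq_mul_inv_one_add (A G Q : Matrix n n α) (hA : IsUnit A)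
    (hG : IsUnit G) (hGs : G.IsSymm) (hM : IsUnit (Aᵀ * G⁻¹ * A + Q)) :
    G⁻¹ - (-(Aᵀ * G⁻¹))ᵀ * (Aᵀ * G⁻¹ * A + Q)⁻¹ * (-(Aᵀ * G⁻¹)) =
      (Aᵀ)⁻¹ * Q * A⁻¹ * (1 + G * ((Aᵀ)⁻¹ * Q * A⁻¹))⁻¹ := by
  set T := (Aᵀ)⁻¹ * Q * A⁻¹
  set K := G⁻¹ + T
  have hAd : IsUnit A.det := (isUnit_iff_isUnit_det A).mp hA
  have hAtd : IsUnit Aᵀ.det := by rwa [det_transpose]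
  have hGd : IsUnit G.det := (isUnit_iff_isUnit_det G).mp hG
  have hM11 : Aᵀ * G⁻¹ * A + Q = Aᵀ * K * A := by
    calc Aᵀ * G⁻¹ * A + Q = Aᵀ * G⁻¹ * A + (Aᵀ * (Aᵀ)⁻¹) * Q * (A⁻¹ * A) := by
          rw [mul_nonsing_inv _ hAtd, nonsing_inv_mul _ hAd, Matrix.one_mul, Matrix.mul_one]
      _ = Aᵀ * K * A := by simp only [K, T]; noncomm_ring
  have hKd : IsUnit K.det := by
    have h := (isUnit_iff_isUnit_det _).mp hM
    rw [hM11, det_mul, det_mul] at h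
    exact isUnit_of_mul_isUnit_right (isUnit_of_mul_isUnit_left h)
  have hSchur : G⁻¹ - (-(Aᵀ * G⁻¹))ᵀ * (Aᵀ * G⁻¹ * A + Q)⁻¹ * (-(Aᵀ * G⁻¹)) =
      G⁻¹ - G⁻¹ * K⁻¹ * G⁻¹ := by
    rw [hM11, Matrix.mul_inv_rev, Matrix.mul_inv_rev, transpose_neg, transpose_mul,
      transpose_transpose, hGs.inv.eq]
    congr 1
    calc -(G⁻¹ * A) * (A⁻¹ * (K⁻¹ * (Aᵀ)⁻¹)) * -(Aᵀ * G⁻¹)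
        = G⁻¹ * (A * A⁻¹) * K⁻¹ * ((Aᵀ)⁻¹ * Aᵀ) * G⁻¹ := by noncomm_ring
      _ = G⁻¹ * K⁻¹ * G⁻¹ := by
          rw [mul_nonsing_inv _ hAd, nonsing_inv_mul _ hAtd, Matrix.mul_one, Matrix.mul_one]
  rw [hSchur]
  calc G⁻¹ - G⁻¹ * K⁻¹ * G⁻¹ = (K * K⁻¹ - G⁻¹ * K⁻¹) * G⁻¹ := by
        rw [mul_nonsing_inv _ hKd]; noncomm_ring
    _ = T * (G * K)⁻¹ := by rw [Matrix.mul_inv_rev]; simp only [K]; noncomm_ring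
    _ = T * (1 + G * T)⁻¹ := by rw [Matrix.mul_add, mul_nonsing_inv _ hGd]

end Algebra

theorem PosDef.transpose_mul_inv_mul_add {G Q : Matrix n n ℝ} (hG : G.PosDef) (hQ : Q.PosDef)
    (A : Matrix n n ℝ) : (Aᵀ * G⁻¹ * A + Q).PosDef := by
  have h : (Aᵀ * G⁻¹ * A).PosSemidef := by
    simpa using hG.inv.posSemidef.conjTranspose_mul_mul_same A
  exact PosDef.posSemidef_add h hQ

section Limits

variable {𝕜 : Type*} [Field 𝕜] [TopologicalSpace 𝕜] [IsTopologicalDivisionRing 𝕜]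

theorem continuousAt_inv_one : ContinuousAt Inv.inv (1 : Matrix n n 𝕜) := by
  refine continuousAt_matrix_inv _ ?_
  rw [det_one, Ring.inverse_eq_inv']
  exact continuousAt_inv₀ one_ne_zero

variable {ι : Type*} {l : Filter ι}

theorem tendsto_inv_transpose_mul_mul_inv {Φ P : ι → Matrix n n 𝕜}
    (hΦ : Tendsto Φ l (𝓝 1)) (hP : Tendsto P l (𝓝 0)) :
    Tendsto (fun s => (Φ s)ᵀ⁻¹ * P s * (Φ s)⁻¹) l (𝓝 0) := by
  have hΦt : Tendsto (fun s => (Φ s)ᵀ) l (𝓝 1) := by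
    simpa [Function.comp_def] using (continuous_id.matrix_transpose.tendsto 1).comp hΦ
  simpa using ((continuousAt_inv_one.tendsto.comp hΦt).mul hP).mul
    (continuousAt_inv_one.tendsto.comp hΦ)

theorem tendsto_mul_inv_one_add_mul {T Γ : ι → Matrix n n 𝕜} {C : Matrix n n 𝕜}
    (hT : Tendsto T l (𝓝 0)) (hΓ : Tendsto Γ l (𝓝 C)) :
    Tendsto (fun s => T s * (1 + Γ s * T s)⁻¹) l (𝓝 0) := by
  have h : Tendsto (fun s => 1 + Γ s * T s) l (𝓝 1) := by
    simpa using tendsto_const_nhds.add (hΓ.mul hT)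
  simpa using hT.mul (continuousAt_inv_one.tendsto.comp h)

end Limits

end Matrix

theorem stmt_8_general (n : ℕ) (t0 δ : ℝ)
    (Φ Γ P : ℝ → Matrix (Fin n) (Fin n) ℝ)
    (hΦinv : ∀ s ∈ Set.Ioo t0 (t0 + δ), IsUnit (Φ s))
    (hΓ : ∀ s ∈ Set.Ioo t0 (t0 + δ), (Γ s).PosDef)
    (hP : ∀ s ∈ Set.Ioo t0 (t0 + δ), (P s).PosDef)
    (hΦlim : Filter.Tendsto Φ (nhdsWithin t0 (Set.Ioo t0 (t0 + δ))) (nhds 1))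
    (hΓlim : Filter.Tendsto Γ (nhdsWithin t0 (Set.Ioo t0 (t0 + δ))) (nhds 0))
    (hPlim : Filter.Tendsto P (nhdsWithin t0 (Set.Ioo t0 (t0 + δ))) (nhds 0)) :
    Filter.Tendsto
      (fun s => (Γ s)⁻¹
        - (-((Φ s)ᵀ * (Γ s)⁻¹))ᵀ * ((Φ s)ᵀ * (Γ s)⁻¹ * Φ s + P s)⁻¹
            * (-((Φ s)ᵀ * (Γ s)⁻¹)))
      (nhdsWithin t0 (Set.Ioo t0 (t0 + δ))) (nhds 0) := by
  refine (tendsto_mul_inv_one_add_mul (tendsto_inv_transpose_mul_mul_inv hΦlim hPlim)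
    hΓlim).congr' ?_
  filter_upwards [self_mem_nhdsWithin] with s hs
  have hΓs := hΓ s hs
  exact (schur_complement_eq_mul_inv_one_add _ _ _ (hΦinv s hs) hΓs.isUnit
    (isHermitian_iff_isSymm.mp hΓs.isHermitian)
    (hΓs.transpose_mul_inv_mul_add (hP s hs) _).isUnit).symm

/-- Short-time limit of the Schur complement: if `Φ(s) → I`, `Γ(s) → 0`, `Π(s) → 0` as
`s ↓ t0`, with `Φ(s)` invertible and `Γ(s), Π(s)` symmetric positive definite, then the
Schur complement `M22 − M12ᵀ M11⁻¹ M12` of the kernel matrix tends to zero. -/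
theorem stmt_8 (n : ℕ) (t0 δ : ℝ) (hδ : 0 < δ)
    (Φ Γ P : ℝ → Matrix (Fin n) (Fin n) ℝ)
    (hΦinv : ∀ s ∈ Set.Ioo t0 (t0 + δ), IsUnit (Φ s))
    (hΓ : ∀ s ∈ Set.Ioo t0 (t0 + δ), (Γ s).PosDef)
    (hP : ∀ s ∈ Set.Ioo t0 (t0 + δ), (P s).PosDef)
    (hΦlim : Filter.Tendsto Φ (nhdsWithin t0 (Set.Ioo t0 (t0 + δ))) (nhds 1))
    (hΓlim : Filter.Tendsto Γ (nhdsWithin t0 (Set.Ioo t0 (t0 + δ))) (nhds 0))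
    (hPlim : Filter.Tendsto P (nhdsWithin t0 (Set.Ioo t0 (t0 + δ))) (nhds 0)) :
    Filter.Tendsto
      (fun s => (Γ s)⁻¹
        - (-((Φ s)ᵀ * (Γ s)⁻¹))ᵀ * ((Φ s)ᵀ * (Γ s)⁻¹ * Φ s + P s)⁻¹
            * (-((Φ s)ᵀ * (Γ s)⁻¹)))
      (nhdsWithin t0 (Set.Ioo t0 (t0 + δ))) (nhds 0) :=
  stmt_8_general n t0 δ Φ Γ P hΦinv hΓ hP hΦlim hΓlim hPlim
end

section
/- (Analytic core of Theorem 1.) Let n, m ≥ 1 and let A : ℝ → ℝ^{n×n}, B : ℝ → ℝ^{n×m}, Q : ℝ → ℝ^{n×n} be continuous with Q(t) symmetric. Let c : (t0, T) → ℝ be differentiable and nowhere zero, and let M11, M12, M22 : (t0, T) → ℝ^{n×n} be differentiable with M11(t), M22(t) symmetric, satisfying for all t ∈ (t0, T): c'(t) = −trace( A(t) + B(t)B(t)ᵀ M11(t) ) · c(t), M11'(t) = −A(t)ᵀM11(t) − M11(t)A(t) − 2 M11(t)B(t)B(t)ᵀM11(t) + Q(t), M12'(t) = −A(t)ᵀM12(t)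 − 2 M11(t)B(t)B(t)ᵀM12(t), and M22'(t) = −2 M12(t)ᵀB(t)B(t)ᵀM12(t). Define κ : (t0,T) × ℝⁿ × ℝⁿ → ℝ by κ(t,x,y) := c(t) · exp( −(1/2)( xᵀM11(t)x + 2 xᵀM12(t)y + yᵀM22(t)y ) ). Then for every t ∈ (t0,T) and every x, y ∈ ℝⁿ, ∂κ/∂t (t,x,y) = −Σ_{i=1}^{n} ∂/∂x_i ( κ(t,x,y) (A(t)x)_i ) + Σ_{i,j=1}^{n} (B(t)B(t)ᵀ)_{ij} ∂²κ/∂x_i∂x_j (t,x,y) − (1/2) xᵀQ(t)x · κ(t,x,y). -/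
/-! The kernel is `κ = c(t) exp(-q/2)` with `q` quadratic in `(x, y)`. With `g = M11 x + M12 y`
(half the `x`-gradient of `q`, since `M11` is symmetric) one has `∂ᵢκ = -gᵢ κ`,
`∂ᵢ∂ⱼκ = (gᵢ gⱼ - (M11)ⱼᵢ) κ` and `∂ᵢ(κ (Ax)ᵢ) = (Aᵢᵢ - gᵢ (Ax)ᵢ) κ`, so every term of the PDE is
`κ` times a scalar. The Riccati-type equations for the blocks give
`∂ₜq = xᵀQx - 2 g·Ax - 2 gᵀBBᵀg`, the equation for `c` supplies the two trace terms, and the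
scalars on both sides agree. -/

open Matrix Real

attribute [local instance] Matrix.normedAddCommGroup Matrix.normedSpace

/-- Partial derivative `∂f/∂x_i` of a function `f : ℝⁿ → ℝ` at `x`. -/
noncomputable def pderiv1 {n : ℕ} (f : (Fin n → ℝ) → ℝ) (i : Fin n) (x : Fin n → ℝ) : ℝ :=
  deriv (fun s => f (Function.update x i s)) (x i)

theorem Matrix.IsSymm.vecMul_eq_mulVec {ι R : Type*} [Fintype ι] [CommSemiring R]
    {P : Matrix ι ι R} (hP : P.IsSymm) (x : ι → R) : x ᵥ* P = P *ᵥ x := by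
  simpa only [hP.eq] using vecMul_transpose P x

theorem Matrix.dotProduct_mulVec_eq_transpose_mulVec {ι ι' R : Type*} [Fintype ι] [Fintype ι']
    [CommSemiring R] (v : ι' → R) (M : Matrix ι' ι R) (w : ι → R) :
    v ⬝ᵥ M *ᵥ w = (Mᵀ *ᵥ v) ⬝ᵥ w := by
  rw [dotProduct_mulVec, mulVec_transpose]

section DerivMatrix

variable {𝕜 ι ι' : Type*} [NontriviallyNormedField 𝕜] [Fintype ι] {t : 𝕜}

theorem HasDerivAt.dotProduct {u v : 𝕜 → ι → 𝕜} {u' v' : ι → 𝕜}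
    (hu : HasDerivAt u u' t) (hv : HasDerivAt v v' t) :
    HasDerivAt (fun s => u s ⬝ᵥ v s) (u' ⬝ᵥ v t + u t ⬝ᵥ v') t := by
  have h := HasDerivAt.fun_sum fun i (_ : i ∈ Finset.univ) =>
      (hasDerivAt_pi.1 hu i).fun_mul (hasDerivAt_pi.1 hv i)
  rw [Finset.sum_add_distrib] at h
  exact h

theorem HasDerivAt.mulVec {M : 𝕜 → Matrix ι' ι 𝕜} {M' : Matrix ι' ι 𝕜} {u : 𝕜 → ι → 𝕜}
    {u' : ι → 𝕜} (hM : HasDerivAt M M' t) (hu : HasDerivAt u u' t) :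
    HasDerivAt (fun s => M s *ᵥ u s) (M' *ᵥ u t + M t *ᵥ u') t :=
  hasDerivAt_pi.2 fun i => (hasDerivAt_pi.1 hM i).dotProduct hu

theorem hasDerivAt_mulVec_update [Fintype ι'] [DecidableEq ι] (M : Matrix ι' ι 𝕜) (x : ι → 𝕜)
    (i : ι) : HasDerivAt (fun s => M *ᵥ Function.update x i s) (M.col i) (x i) := by
  simpa using (hasDerivAt_const (x i) M).mulVec (hasDerivAt_update x i (x i))

end DerivMatrix

section GaussianKernel

variable {n : ℕ}

def gaussExponent (P R S : Matrix (Fin n) (Fin n) ℝ) (x y : Fin n → ℝ) : ℝ :=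
  x ⬝ᵥ P *ᵥ x + 2 * (x ⬝ᵥ R *ᵥ y) + y ⬝ᵥ S *ᵥ y

noncomputable def gaussKernel (c : ℝ) (P R S : Matrix (Fin n) (Fin n) ℝ) (x y : Fin n → ℝ) : ℝ :=
  c * exp (-(1/2) * gaussExponent P R S x y)

variable {c : ℝ} {P R S : Matrix (Fin n) (Fin n) ℝ} {y : Fin n → ℝ}

theorem hasDerivAt_gaussKernel_update (hP : P.IsSymm) (x : Fin n → ℝ) (i : Fin n) :
    HasDerivAt (fun s => gaussKernel c P R S (Function.update x i s) y)
      (-(P *ᵥ x + R *ᵥ y) i * gaussKernel c P R S x y) (x i) := by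
  have hx := hasDerivAt_update x i (x i)
  have hq := ((hx.dotProduct ((hasDerivAt_const _ P).mulVec hx)).fun_add
    ((hx.dotProduct (hasDerivAt_const _ (R *ᵥ y))).const_mul 2)).add_const (y ⬝ᵥ S *ᵥ y)
  refine ((hq.const_mul (-(1/2))).exp.const_mul c).congr_deriv ?_
  simp only [gaussKernel, gaussExponent, Function.update_eq_self, single_dotProduct,
    dotProduct_mulVec x P, hP.vecMul_eq_mulVec, dotProduct_single, zero_mulVec, zero_add,
    dotProduct_zero, add_zero, one_mul, mul_one, Pi.add_apply]
  ring

theorem pderiv1_gaussKernel (hP : P.IsSymm) (x : Fin n → ℝ) (i : Fin n) :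
    pderiv1 (fun x' => gaussKernel c P R S x' y) i x
      = -(P *ᵥ x + R *ᵥ y) i * gaussKernel c P R S x y :=
  (hasDerivAt_gaussKernel_update hP x i).deriv

theorem pderiv1_pderiv1_gaussKernel (hP : P.IsSymm) (x : Fin n → ℝ) (i j : Fin n) :
    pderiv1 (pderiv1 (fun x' => gaussKernel c P R S x' y) j) i x
      = ((P *ᵥ x + R *ᵥ y) i * (P *ᵥ x + R *ᵥ y) j - P j i) * gaussKernel c P R S x y := by
  have hg : HasDerivAt (fun s => -(P *ᵥ Function.update x i s + R *ᵥ y) j) (-P j i) (x i) :=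
    ((hasDerivAt_pi.1 (hasDerivAt_mulVec_update P x i) j).add_const _).neg
  rw [show pderiv1 (fun x' => gaussKernel c P R S x' y) j = _ from
    funext fun x' => pderiv1_gaussKernel hP x' j]
  refine ((hg.mul (hasDerivAt_gaussKernel_update hP x i)).congr_deriv ?_).deriv
  simp only [Function.update_eq_self]
  ring

theorem pderiv1_gaussKernel_mul_mulVec (hP : P.IsSymm) (A : Matrix (Fin n) (Fin n) ℝ)
    (x : Fin n → ℝ) (i : Fin n) :
    pderiv1 (fun x' => gaussKernel c P R S x' y * (A *ᵥ x') i) i x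
      = -(P *ᵥ x + R *ᵥ y) i * gaussKernel c P R S x y * (A *ᵥ x) i
        + gaussKernel c P R S x y * A i i := by
  refine ((hasDerivAt_gaussKernel_update hP x i).mul
    (hasDerivAt_pi.1 (hasDerivAt_mulVec_update A x i) i)).congr_deriv ?_ |>.deriv
  rw [Function.update_eq_self]
  rfl

theorem sum_pderiv1_gaussKernel_mul_mulVec (hP : P.IsSymm) (A : Matrix (Fin n) (Fin n) ℝ)
    (x : Fin n → ℝ) :
    ∑ i, pderiv1 (fun x' => gaussKernel c P R S x' y * (A *ᵥ x') i) i x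
      = (A.trace - (P *ᵥ x + R *ᵥ y) ⬝ᵥ A *ᵥ x) * gaussKernel c P R S x y := by
  simp only [pderiv1_gaussKernel_mul_mulVec hP, sub_eq_neg_add, add_mul, trace, diag,
    dotProduct, Finset.sum_add_distrib, ← Finset.sum_neg_distrib, Finset.sum_mul]
  congr 1 <;> exact Finset.sum_congr rfl fun i _ => by ring

theorem sum_mul_pderiv1_pderiv1_gaussKernel (hP : P.IsSymm) (D : Matrix (Fin n) (Fin n) ℝ)
    (x : Fin n → ℝ) :
    ∑ i, ∑ j, D i j * pderiv1 (pderiv1 (fun x' => gaussKernel c P R S x' y) j) i x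
      = ((P *ᵥ x + R *ᵥ y) ⬝ᵥ D *ᵥ (P *ᵥ x + R *ᵥ y) - (D * P).trace)
        * gaussKernel c P R S x y := by
  simp only [pderiv1_pderiv1_gaussKernel hP, trace, diag, mul_apply, dotProduct, mulVec,
    Finset.mul_sum, ← Finset.sum_sub_distrib, Finset.sum_mul]
  exact Finset.sum_congr rfl fun i _ => Finset.sum_congr rfl fun j _ => by ring

theorem hasDerivAt_gaussKernel_time {c : ℝ → ℝ} {θ t : ℝ}
    {P R S : ℝ → Matrix (Fin n) (Fin n) ℝ} {P' R' S' : Matrix (Fin n) (Fin n) ℝ}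
    (hc : HasDerivAt c (θ * c t) t) (hP : HasDerivAt P P' t) (hR : HasDerivAt R R' t)
    (hS : HasDerivAt S S' t) (x y : Fin n → ℝ) :
    HasDerivAt (fun τ => gaussKernel (c τ) (P τ) (R τ) (S τ) x y)
      ((θ - (1/2) * gaussExponent P' R' S' x y) * gaussKernel (c t) (P t) (R t) (S t) x y) t := by
  have hconst := hasDerivAt_const t x
  have hq := ((hconst.dotProduct (hP.mulVec hconst)).fun_add
    ((hconst.dotProduct (hR.mulVec (hasDerivAt_const t y))).const_mul 2)).fun_add
    ((hasDerivAt_const t y).dotProduct (hS.mulVec (hasDerivAt_const t y)))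
  refine (hc.mul (hq.const_mul (-(1/2))).exp).congr_deriv ?_
  simp only [gaussKernel, gaussExponent, mulVec_zero, add_zero, zero_dotProduct, zero_add]
  ring

theorem gaussExponent_riccati {A P R S Q : Matrix (Fin n) (Fin n) ℝ} (hP : P.IsSymm)
    (hS : S.IsSymm) (x y : Fin n → ℝ) :
    gaussExponent (-Aᵀ * P - P * A - 2 • (P * S * P) + Q) (-Aᵀ * R - 2 • (P * S * R))
        (-(2 • (Rᵀ * S * R))) x y
      = x ⬝ᵥ Q *ᵥ x - 2 * ((P *ᵥ x + R *ᵥ y) ⬝ᵥ A *ᵥ x)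
        - 2 * ((P *ᵥ x + R *ᵥ y) ⬝ᵥ S *ᵥ (P *ᵥ x + R *ᵥ y)) := by
  simp only [gaussExponent, add_mulVec, sub_mulVec, neg_mulVec, ← mulVec_mulVec,
    dotProduct_add, dotProduct_sub, dotProduct_neg, add_dotProduct, mulVec_add,
    dotProduct_mulVec_eq_transpose_mulVec x Aᵀ, dotProduct_mulVec_eq_transpose_mulVec x P,
    dotProduct_mulVec_eq_transpose_mulVec y Rᵀ, transpose_transpose, hP.eq, two_smul]
  have hcross : R *ᵥ y ⬝ᵥ S *ᵥ P *ᵥ x = P *ᵥ x ⬝ᵥ S *ᵥ R *ᵥ y := by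
    rw [dotProduct_mulVec_eq_transpose_mulVec, hS.eq, dotProduct_comm]
  rw [hcross, dotProduct_comm (A *ᵥ x), dotProduct_comm (A *ᵥ x)]
  ring

end GaussianKernel

theorem stmt_13_general (n m : ℕ) (t0 T : ℝ)
    (A Q : ℝ → Matrix (Fin n) (Fin n) ℝ) (B : ℝ → Matrix (Fin n) (Fin m) ℝ)
    (c : ℝ → ℝ)
    (M11 M12 M22 : ℝ → Matrix (Fin n) (Fin n) ℝ)
    (hM11symm : ∀ t ∈ Set.Ioo t0 T, (M11 t).IsSymm)
    (hc : ∀ t ∈ Set.Ioo t0 T,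
      HasDerivAt c (-(Matrix.trace (A t + B t * (B t)ᵀ * M11 t)) * c t) t)
    (hM11 : ∀ t ∈ Set.Ioo t0 T,
      HasDerivAt M11
        (-(A t)ᵀ * M11 t - M11 t * A t - 2 • (M11 t * (B t * (B t)ᵀ) * M11 t) + Q t) t)
    (hM12 : ∀ t ∈ Set.Ioo t0 T,
      HasDerivAt M12
        (-(A t)ᵀ * M12 t - 2 • (M11 t * (B t * (B t)ᵀ) * M12 t)) t)
    (hM22 : ∀ t ∈ Set.Ioo t0 T,
      HasDerivAt M22 (-(2 • ((M12 t)ᵀ * (B t * (B t)ᵀ) * M12 t))) t)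
    (κ : ℝ → (Fin n → ℝ) → (Fin n → ℝ) → ℝ)
    (hκ : κ = fun t x y => c t *
      Real.exp (-(1/2) * (x ⬝ᵥ M11 t *ᵥ x + 2 * (x ⬝ᵥ M12 t *ᵥ y) + y ⬝ᵥ M22 t *ᵥ y))) :
    ∀ t ∈ Set.Ioo t0 T, ∀ x y : Fin n → ℝ,
      HasDerivAt (fun τ => κ τ x y)
        (-(∑ i, pderiv1 (fun x' => κ t x' y * (A t *ᵥ x') i) i x)
          + (∑ i, ∑ j, (B t * (B t)ᵀ) i j *
              pderiv1 (pderiv1 (fun x' => κ t x' y) j) i x)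
          - (1/2) * (x ⬝ᵥ Q t *ᵥ x) * κ t x y) t := by
  intro t ht x y
  obtain rfl : κ = fun t x y => gaussKernel (c t) (M11 t) (M12 t) (M22 t) x y := hκ
  have hP := hM11symm t ht
  have hS : (B t * (B t)ᵀ).IsSymm := by
    rw [IsSymm, transpose_mul, transpose_transpose]
  refine (hasDerivAt_gaussKernel_time (hc t ht) (hM11 t ht) (hM12 t ht) (hM22 t ht) x y)
    |>.congr_deriv ?_
  rw [sum_pderiv1_gaussKernel_mul_mulVec hP, sum_mul_pderiv1_pderiv1_gaussKernel hP,
    gaussExponent_riccati hP hS, trace_add]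
  ring

/-- Analytic core of Theorem 1: if the prefactor `c` and the blocks `M11, M12, M22`
satisfy the stated ODE system, then the Gaussian-type kernel
`κ(t,x,y) = c(t)·exp(−(1/2)(xᵀM11x + 2xᵀM12y + yᵀM22y))` solves the
reaction–advection–diffusion PDE
`∂ₜκ = −⟨∇ₓ, κ A x⟩ + ⟨BBᵀ, ∇ₓ²κ⟩ − (1/2)xᵀQx·κ`. -/
theorem stmt_13 (n m : ℕ) (hn : 1 ≤ n) (hm : 1 ≤ m) (t0 T : ℝ)
    (A Q : ℝ → Matrix (Fin n) (Fin n) ℝ) (B : ℝ → Matrix (Fin n) (Fin m) ℝ)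
    (hA : Continuous A) (hB : Continuous B) (hQ : Continuous Q)
    (hQsymm : ∀ t, (Q t).IsSymm)
    (c : ℝ → ℝ)
    (M11 M12 M22 : ℝ → Matrix (Fin n) (Fin n) ℝ)
    (hM11symm : ∀ t ∈ Set.Ioo t0 T, (M11 t).IsSymm)
    (hM22symm : ∀ t ∈ Set.Ioo t0 T, (M22 t).IsSymm)
    (hc0 : ∀ t ∈ Set.Ioo t0 T, c t ≠ 0)
    (hc : ∀ t ∈ Set.Ioo t0 T,
      HasDerivAt c (-(Matrix.trace (A t + B t * (B t)ᵀ * M11 t)) * c t) t)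
    (hM11 : ∀ t ∈ Set.Ioo t0 T,
      HasDerivAt M11
        (-(A t)ᵀ * M11 t - M11 t * A t - 2 • (M11 t * (B t * (B t)ᵀ) * M11 t) + Q t) t)
    (hM12 : ∀ t ∈ Set.Ioo t0 T,
      HasDerivAt M12
        (-(A t)ᵀ * M12 t - 2 • (M11 t * (B t * (B t)ᵀ) * M12 t)) t)
    (hM22 : ∀ t ∈ Set.Ioo t0 T,
      HasDerivAt M22 (-(2 • ((M12 t)ᵀ * (B t * (B t)ᵀ) * M12 t))) t)
    (κ : ℝ → (Fin n → ℝ) → (Fin n → ℝ) → ℝ)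
    (hκ : κ = fun t x y => c t *
      Real.exp (-(1/2) * (x ⬝ᵥ M11 t *ᵥ x + 2 * (x ⬝ᵥ M12 t *ᵥ y) + y ⬝ᵥ M22 t *ᵥ y))) :
    ∀ t ∈ Set.Ioo t0 T, ∀ x y : Fin n → ℝ,
      HasDerivAt (fun τ => κ τ x y)
        (-(∑ i, pderiv1 (fun x' => κ t x' y * (A t *ᵥ x') i) i x)
          + (∑ i, ∑ j, (B t * (B t)ᵀ) i j *
              pderiv1 (pderiv1 (fun x' => κ t x' y) j) i x)
          - (1/2) * (x ⬝ᵥ Q t *ᵥ x) * κ t x y) t :=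
  stmt_13_general n m t0 T A Q B c M11 M12 M22 hM11symm hc hM11 hM12 hM22 κ hκ
end

section
/- Let n ≥ 1, ω_1, …, ω_n > 0, t0 ∈ ℝ, t > t0, and y ∈ ℝⁿ. With κ(t, x, y) := ∏_{i=1}^{n} ( ω_i / (4π sinh(ω_i (t − t0))) )^{1/2} · exp( −( ω_i (x_i² + y_i²) cosh(ω_i (t − t0)) − 2 ω_i x_i y_i ) / ( 4 sinh(ω_i (t − t0)) ) ), the integral over x satisfies ∫_{ℝⁿ} κ(t, x, y) dx = ∏_{i=1}^{n} ( cosh(ω_i (t − t0)) )^{−1/2} · exp( −( ω_i y_i² tanh(ω_i (t − t0)) ) / 4 ). In particular, this integral is strictly less than 1 for t > t0. -/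
/-!
Both the diffusion and the killing rate split over coordinates, so the kernel is a product of
one-dimensional Mehler kernels and its mass factorizes. In each coordinate the exponent is a
quadratic polynomial in `x`; completing the square gives a Gaussian integral, and
`cosh² − sinh² = 1` collapses the result to `cosh(ωs)^{−1/2} exp(−ωy² tanh(ωs)/4)`. For `ωs > 0`
the first factor is `< 1` and the second `≤ 1`.
-/

open Real MeasureTheory

/-- For `a < 0` both sides are junk zeros: the integrand is not integrable and `√(π / a) = 0`. -/
theorem integral_exp_neg_mul_sq_add_mul_add {a : ℝ} (ha : a ≠ 0) (b d : ℝ) :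
    ∫ x : ℝ, exp (-a * x ^ 2 + b * x + d) = √(π / a) * exp (d + b ^ 2 / (4 * a)) := by
  have complete_square : ∀ x : ℝ,
      -a * x ^ 2 + b * x + d = -a * (x - b / (2 * a)) ^ 2 + (d + b ^ 2 / (4 * a)) := by
    intro x
    field_simp
    ring
  simp_rw [complete_square, exp_add, integral_mul_const]
  rw [integral_sub_right_eq_self (fun z : ℝ => exp (-a * z ^ 2)), integral_gaussian]

noncomputable def killedHeatKernel (ω s x y : ℝ) : ℝ :=
  √(ω / (4 * π * sinh (ω * s))) *
    exp (-((ω * (x ^ 2 + y ^ 2) * cosh (ω * s) - 2 * ω * x * y) / (4 * sinh (ω * s))))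

noncomputable def killedHeatMass (ω s y : ℝ) : ℝ :=
  1 / √(cosh (ω * s)) * exp (-(ω * y ^ 2 * tanh (ω * s)) / 4)

theorem integral_killedHeatKernel {ω s : ℝ} (hω : 0 < ω) (hs : 0 < s) (y : ℝ) :
    ∫ x : ℝ, killedHeatKernel ω s x y = killedHeatMass ω s y := by
  have hsinh : 0 < sinh (ω * s) := sinh_pos_iff.2 (mul_pos hω hs)
  have hcosh : 0 < cosh (ω * s) := cosh_pos _
  set a := ω * cosh (ω * s) / (4 * sinh (ω * s)) with ha
  set b := ω * y / (2 * sinh (ω * s)) with hb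
  set d := -(ω * y ^ 2 * cosh (ω * s) / (4 * sinh (ω * s))) with hd
  have hexponent : ∀ x : ℝ,
      -((ω * (x ^ 2 + y ^ 2) * cosh (ω * s) - 2 * ω * x * y) / (4 * sinh (ω * s)))
        = -a * x ^ 2 + b * x + d := by
    intro x
    rw [ha, hb, hd]
    field_simp
    ring
  have hprefactor : √(ω / (4 * π * sinh (ω * s))) * √(π / a) = 1 / √(cosh (ω * s)) := by
    rw [← sqrt_mul (by positivity), one_div, ← sqrt_inv, ha]
    congr 1
    field_simp
  have hcompleted : d + b ^ 2 / (4 * a) = -(ω * y ^ 2 * tanh (ω * s)) / 4 := by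
    rw [ha, hb, hd, tanh_eq_sinh_div_cosh]
    field_simp
    linear_combination (-(4 * y ^ 2)) * cosh_sq (ω * s)
  simp_rw [killedHeatKernel, hexponent, integral_const_mul,
    integral_exp_neg_mul_sq_add_mul_add (by positivity : a ≠ 0), ← mul_assoc, hprefactor,
    hcompleted, killedHeatMass]

theorem killedHeatMass_pos (ω s y : ℝ) : 0 < killedHeatMass ω s y := by
  unfold killedHeatMass
  have := cosh_pos (ω * s)
  positivity

theorem killedHeatMass_lt_one {ω s : ℝ} (hω : 0 < ω) (hs : 0 < s) (y : ℝ) :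
    killedHeatMass ω s y < 1 := by
  have hωs : 0 < ω * s := mul_pos hω hs
  have hcosh : 1 < cosh (ω * s) := one_lt_cosh.2 hωs.ne'
  have hprefactor : 1 / √(cosh (ω * s)) < 1 := by
    rw [div_lt_one (by positivity), lt_sqrt zero_le_one, one_pow]
    exact hcosh
  have hdecay : exp (-(ω * y ^ 2 * tanh (ω * s)) / 4) ≤ 1 := by
    have : 0 ≤ ω * y ^ 2 * tanh (ω * s) := by
      have := div_pos (sinh_pos_iff.2 hωs) (cosh_pos (ω * s))
      rw [tanh_eq_sinh_div_cosh]
      positivity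
    rw [exp_le_one_iff]
    linarith
  exact mul_lt_one_of_nonneg_of_lt_one_left (by positivity) hprefactor hdecay

/-- Total mass of the kernel of Brownian motion with quadratic killing: integrating over
`x` yields `∏ᵢ cosh(ωᵢ(t−t0))^{−1/2} exp(−ωᵢyᵢ²tanh(ωᵢ(t−t0))/4)`, which is strictly
less than one for `t > t0`. -/
theorem stmt_15 (n : ℕ) (hn : 1 ≤ n) (ω : Fin n → ℝ) (hω : ∀ i, 0 < ω i)
    (t0 t : ℝ) (ht : t0 < t) (y : Fin n → ℝ)
    (κ : ℝ → (Fin n → ℝ) → (Fin n → ℝ) → ℝ)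
    (hκ : κ = fun t x y => ∏ i,
      (Real.sqrt (ω i / (4 * Real.pi * Real.sinh (ω i * (t - t0)))) *
        Real.exp (-((ω i * ((x i)^2 + (y i)^2) * Real.cosh (ω i * (t - t0))
            - 2 * ω i * x i * y i) / (4 * Real.sinh (ω i * (t - t0))))))) :
    (∫ x : Fin n → ℝ, κ t x y)
        = ∏ i, ((1 / Real.sqrt (Real.cosh (ω i * (t - t0)))) *
            Real.exp (-(ω i * (y i)^2 * Real.tanh (ω i * (t - t0))) / 4)) ∧
    (∫ x : Fin n → ℝ, κ t x y) < 1 := by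
  have hs : 0 < t - t0 := sub_pos.2 ht
  have hmass : ∫ x : Fin n → ℝ, κ t x y = ∏ i, killedHeatMass (ω i) (t - t0) (y i) := by
    subst hκ
    rw [volume_pi]
    exact (integral_fintype_prod_eq_prod (μ := fun _ => volume)
      fun i x => killedHeatKernel (ω i) (t - t0) x (y i)).trans
        (Finset.prod_congr rfl fun i _ => integral_killedHeatKernel (hω i) hs (y i))
  refine ⟨hmass, hmass ▸ ?_⟩
  calc ∏ i, killedHeatMass (ω i) (t - t0) (y i) < ∏ _i : Fin n, (1 : ℝ) :=
        Finset.prod_lt_prod_of_nonempty (fun i _ => killedHeatMass_pos _ _ _)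
          (fun i _ => killedHeatMass_lt_one (hω i) hs _) ⟨⟨0, hn⟩, Finset.mem_univ _⟩
    _ = 1 := Finset.prod_const_one
end
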